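/- Let X and Y be independent, identically distributed real-valued random variables and let t ≥ 0. Then E[e^{−t(X−Y)²}] − E[e^{−t(X+Y)²}] = 2 Σ_{n=0}^{∞} (2t)^{2n+1}/(2n+1)! · [E(X^{2n+1} e^{−tX²})]², where each expectation E(X^{2n+1} e^{−tX²}) is finite (the integrand is bounded for t > 0, and for t = 0 the identity reads 0 = 0 when interpreted with the n=0 term for t = 0). In particular, E[e^{−t(X−Y)²}] ≥ E[e^{−t(X+Y)²}]. -/

import Mathlib

/-!
Since `-t(x ∓ y)² = -tx² - ty² ± 2txy`, the difference `e^{-t(x-y)²} - e^{-t(x+y)²}` equals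
`2 e^{-tx²} e^{-ty²} sinh (2txy)`, and the odd power series of `sinh` splits every term into a
product of a function of `x` and the same function of `y`. For i.i.d. `X, Y` the expectation of
such a product is the square of a single expectation. For `t ≥ 0` the series of absolute values
is the same expansion at `|x|, |y|`, a function bounded by `1`, so the series may be integrated
term by term.
-/

open MeasureTheory ProbabilityTheory Real
open scoped Nat

lemma pow_mul_exp_neg_le_factorial {s : ℝ} (hs : 0 ≤ s) (k : ℕ) :
    s ^ k * exp (-s) ≤ k ! := by
  have h := pow_div_factorial_le_exp s hs k
  rw [div_le_iff₀ (by positivity)] at h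
  rw [exp_neg, ← div_eq_mul_inv, div_le_iff₀ (exp_pos s), mul_comm]
  exact h

lemma abs_pow_mul_exp_neg_mul_sq_le {t : ℝ} (ht : 0 < t) (k : ℕ) (x : ℝ) :
    |x ^ k * exp (-t * x ^ 2)| ≤ 1 + k ! / t ^ k := by
  have hexp : exp (-t * x ^ 2) ≤ 1 := exp_le_one_iff.mpr (by nlinarith [sq_nonneg x])
  have hpow : |x| ^ k ≤ 1 + (x ^ 2) ^ k := by
    rcases le_total |x| 1 with h | h
    · linarith [pow_le_one₀ (n := k) (abs_nonneg x) h, pow_nonneg (sq_nonneg x) k]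
    · rw [← sq_abs, ← pow_mul]
      linarith [pow_le_pow_right₀ h (by omega : k ≤ 2 * k)]
  have hgauss : (x ^ 2) ^ k * exp (-t * x ^ 2) ≤ k ! / t ^ k := by
    have h := pow_mul_exp_neg_le_factorial (mul_nonneg ht.le (sq_nonneg x)) k
    rw [le_div_iff₀ (pow_pos ht k)]
    rw [mul_pow, neg_mul_eq_neg_mul] at h
    linarith
  calc |x ^ k * exp (-t * x ^ 2)| = |x| ^ k * exp (-t * x ^ 2) := by
        rw [abs_mul, abs_pow, abs_exp]
    _ ≤ (1 + (x ^ 2) ^ k) * exp (-t * x ^ 2) := by gcongr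
    _ = exp (-t * x ^ 2) + (x ^ 2) ^ k * exp (-t * x ^ 2) := by ring
    _ ≤ 1 + k ! / t ^ k := add_le_add hexp hgauss

lemma hasSum_exp_neg_mul_sub_sq_sub_exp_neg_mul_add_sq (t x y : ℝ) :
    HasSum (fun n : ℕ => 2 * ((2 * t) ^ (2 * n + 1) / (2 * n + 1)! *
        (x ^ (2 * n + 1) * exp (-t * x ^ 2) * (y ^ (2 * n + 1) * exp (-t * y ^ 2)))))
      (exp (-t * (x - y) ^ 2) - exp (-t * (x + y) ^ 2)) := by
  have hsub : exp (-t * (x - y) ^ 2)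
      = exp (2 * t * x * y) * (exp (-t * x ^ 2) * exp (-t * y ^ 2)) := by
    rw [← exp_add, ← exp_add]; ring_nf
  have hadd : exp (-t * (x + y) ^ 2)
      = exp (-(2 * t * x * y)) * (exp (-t * x ^ 2) * exp (-t * y ^ 2)) := by
    rw [← exp_add, ← exp_add]; ring_nf
  have hsplit : exp (-t * (x - y) ^ 2) - exp (-t * (x + y) ^ 2)
      = 2 * (sinh (2 * t * x * y) * (exp (-t * x ^ 2) * exp (-t * y ^ 2))) := by
    rw [hsub, hadd, sinh_eq]; ring
  rw [hsplit]
  refine (((hasSum_sinh (2 * t * x * y)).mul_right _).mul_left 2).congr_fun fun n => ?_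
  rw [mul_pow, mul_pow]
  ring

lemma hasSum_norm_exp_neg_mul_sub_sq_sub_exp_neg_mul_add_sq {t : ℝ} (ht : 0 ≤ t) (x y : ℝ) :
    HasSum (fun n : ℕ => ‖2 * ((2 * t) ^ (2 * n + 1) / (2 * n + 1)! *
        (x ^ (2 * n + 1) * exp (-t * x ^ 2) * (y ^ (2 * n + 1) * exp (-t * y ^ 2))))‖)
      (exp (-t * (|x| - |y|) ^ 2) - exp (-t * (|x| + |y|) ^ 2)) := by
  convert hasSum_exp_neg_mul_sub_sq_sub_exp_neg_mul_add_sq t |x| |y| using 2 with n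
  simp only [norm_mul, norm_div, norm_pow, Real.norm_eq_abs, abs_exp, sq_abs, Nat.abs_cast,
    abs_two, abs_of_nonneg ht]

section

variable {Ω : Type*} [MeasurableSpace Ω] {μ : Measure Ω}

lemma hasSum_integral_of_hasSum_norm {ι E : Type*} [Countable ι] [NormedAddCommGroup E]
    [NormedSpace ℝ E] {F : ι → Ω → E} {f : Ω → E} {g : Ω → ℝ}
    (hF : ∀ n, AEStronglyMeasurable (F n) μ) (hg : Integrable g μ)
    (hnorm : ∀ ω, HasSum (fun n => ‖F n ω‖) (g ω))
    (hlim : ∀ ω, HasSum (fun n => F n ω) (f ω)) :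
    HasSum (fun n => ∫ ω, F n ω ∂μ) (∫ ω, f ω ∂μ) :=
  hasSum_integral_of_dominated_convergence (fun n ω => ‖F n ω‖) hF
    (fun _ => .of_forall fun _ => le_rfl) (.of_forall fun ω => (hnorm ω).summable)
    (hg.congr (.of_forall fun ω => (hnorm ω).tsum_eq.symm)) (.of_forall hlim)

lemma AEMeasurable.integrable_pow_mul_exp_neg_mul_sq [IsFiniteMeasure μ] {Z : Ω → ℝ}
    (hZ : AEMeasurable Z μ) {t : ℝ} (ht : 0 < t) (k : ℕ) :
    Integrable (fun ω => Z ω ^ k * exp (-t * Z ω ^ 2)) μ := by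
  refine .of_bound (by fun_prop) (1 + k ! / t ^ k) (.of_forall fun ω => ?_)
  exact abs_pow_mul_exp_neg_mul_sq_le ht k (Z ω)

lemma AEMeasurable.integrable_exp_neg_mul_sq [IsFiniteMeasure μ] {Z : Ω → ℝ}
    (hZ : AEMeasurable Z μ) {t : ℝ} (ht : 0 ≤ t) :
    Integrable (fun ω => exp (-t * Z ω ^ 2)) μ := by
  refine .of_bound (by fun_prop) 1 (.of_forall fun ω => ?_)
  rw [Real.norm_eq_abs, abs_exp, exp_le_one_iff]
  nlinarith [sq_nonneg (Z ω)]

lemma ProbabilityTheory.IndepFun.integral_comp_mul_comp_eq_sq {α : Type*} [MeasurableSpace α]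
    {X Y : Ω → α} (hXY : IndepFun X Y μ) (hid : IdentDistrib X Y μ μ)
    {g : α → ℝ} (hg : Measurable g) :
    ∫ ω, g (X ω) * g (Y ω) ∂μ = (∫ ω, g (X ω) ∂μ) ^ 2 := by
  calc ∫ ω, g (X ω) * g (Y ω) ∂μ = (∫ ω, g (X ω) ∂μ) * ∫ ω, g (Y ω) ∂μ :=
        (hXY.comp hg hg).integral_fun_mul_eq_mul_integral
          (hg.comp_aemeasurable hid.aemeasurable_fst).aestronglyMeasurable
          (hg.comp_aemeasurable hid.aemeasurable_snd).aestronglyMeasurable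
    _ = (∫ ω, g (X ω) ∂μ) ^ 2 := by rw [sq]; exact congrArg _ (hid.comp hg).integral_eq.symm

lemma ProbabilityTheory.IndepFun.hasSum_integral_exp_neg_mul_sub_sq_sub [IsFiniteMeasure μ]
    {X Y : Ω → ℝ} (hXY : IndepFun X Y μ) (hid : IdentDistrib X Y μ μ)
    {t : ℝ} (ht : 0 ≤ t) :
    HasSum (fun n : ℕ => 2 * ((2 * t) ^ (2 * n + 1) / (2 * n + 1)! *
        (∫ ω, X ω ^ (2 * n + 1) * exp (-t * X ω ^ 2) ∂μ) ^ 2))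
      ((∫ ω, exp (-t * (X ω - Y ω) ^ 2) ∂μ)
        - ∫ ω, exp (-t * (X ω + Y ω) ^ 2) ∂μ) := by
  have hX := hid.aemeasurable_fst
  have hY := hid.aemeasurable_snd
  have hsum := hasSum_integral_of_hasSum_norm (μ := μ) (fun n => by fun_prop)
    (((hX.abs.sub hY.abs).integrable_exp_neg_mul_sq ht).sub
      ((hX.abs.add hY.abs).integrable_exp_neg_mul_sq ht))
    (fun ω => hasSum_norm_exp_neg_mul_sub_sq_sub_exp_neg_mul_add_sq ht (X ω) (Y ω))
    (fun ω => hasSum_exp_neg_mul_sub_sq_sub_exp_neg_mul_add_sq t (X ω) (Y ω))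
  rw [integral_sub
    (AEMeasurable.integrable_exp_neg_mul_sq (Z := fun ω => X ω - Y ω) (hX.sub hY) ht)
    (AEMeasurable.integrable_exp_neg_mul_sq (Z := fun ω => X ω + Y ω) (hX.add hY) ht)] at hsum
  refine hsum.congr_fun fun n => ?_
  rw [integral_const_mul, integral_const_mul,
    hXY.integral_comp_mul_comp_eq_sq hid (g := fun x => x ^ (2 * n + 1) * exp (-t * x ^ 2))
      (by fun_prop)]

end

theorem expectation_exp_neg_sq_sub_eq_tsum_general
    {Ω : Type*} [MeasurableSpace Ω] (μ : Measure Ω) [IsProbabilityMeasure μ]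
    (X Y : Ω → ℝ)
    (hindep : IndepFun X Y μ) (hid : IdentDistrib X Y μ μ)
    (t : ℝ) (ht : 0 ≤ t) :
    (0 < t → ∀ n : ℕ,
      Integrable (fun ω => X ω ^ (2 * n + 1) * Real.exp (-t * X ω ^ 2)) μ)
    ∧ (∫ ω, Real.exp (-t * (X ω - Y ω) ^ 2) ∂μ)
        - ∫ ω, Real.exp (-t * (X ω + Y ω) ^ 2) ∂μ
      = 2 * ∑' n : ℕ, (2 * t) ^ (2 * n + 1) / (Nat.factorial (2 * n + 1))
          * (∫ ω, X ω ^ (2 * n + 1) * Real.exp (-t * X ω ^ 2) ∂μ) ^ 2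
    ∧ (∫ ω, Real.exp (-t * (X ω + Y ω) ^ 2) ∂μ)
      ≤ ∫ ω, Real.exp (-t * (X ω - Y ω) ^ 2) ∂μ := by
  have hsum := hindep.hasSum_integral_exp_neg_mul_sub_sq_sub hid ht
  refine ⟨fun htpos n => hid.aemeasurable_fst.integrable_pow_mul_exp_neg_mul_sq htpos _,
    by rw [← hsum.tsum_eq, tsum_mul_left], ?_⟩
  have hdiff_nonneg := hsum.nonneg fun n => by positivity
  linarith

/-- For i.i.d. real random variables `X, Y` and `t ≥ 0`,
`E e^{−t(X−Y)²} − E e^{−t(X+Y)²} = 2 Σ_{n≥0} (2t)^{2n+1}/(2n+1)! · [E(X^{2n+1}e^{−tX²})]²`,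
where for `t > 0` each expectation `E(X^{2n+1}e^{−tX²})` is finite; in particular
`E e^{−t(X−Y)²} ≥ E e^{−t(X+Y)²}`. -/
theorem expectation_exp_neg_sq_sub_eq_tsum
    {Ω : Type*} [MeasurableSpace Ω] (μ : Measure Ω) [IsProbabilityMeasure μ]
    (X Y : Ω → ℝ) (hX : Measurable X) (hY : Measurable Y)
    (hindep : IndepFun X Y μ) (hid : IdentDistrib X Y μ μ)
    (t : ℝ) (ht : 0 ≤ t) :
    (0 < t → ∀ n : ℕ,
      Integrable (fun ω => X ω ^ (2 * n + 1) * Real.exp (-t * X ω ^ 2)) μ)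
    ∧ (∫ ω, Real.exp (-t * (X ω - Y ω) ^ 2) ∂μ)
        - ∫ ω, Real.exp (-t * (X ω + Y ω) ^ 2) ∂μ
      = 2 * ∑' n : ℕ, (2 * t) ^ (2 * n + 1) / (Nat.factorial (2 * n + 1))
          * (∫ ω, X ω ^ (2 * n + 1) * Real.exp (-t * X ω ^ 2) ∂μ) ^ 2
    ∧ (∫ ω, Real.exp (-t * (X ω + Y ω) ^ 2) ∂μ)
      ≤ ∫ ω, Real.exp (-t * (X ω - Y ω) ^ 2) ∂μ :=
  expectation_exp_neg_sq_sub_eq_tsum_general μ X Y hindep hid t ht
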